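/- arXiv:1307.6327 — 8 statements merged into one kernel-verified Lean document; each statement's English description precedes it below -/
import Mathlib

section
/- For all integers r ≥ 2 and positive integers k_1,...,k_r, t_1,...,t_r with k_i ≥ t_i + 1 ≥ 2 for all i, the Ramsey number R([k_1,t_1],...,[k_r,t_r]) satisfies R([k_1,t_1],...,[k_r,t_r]) ≤ Σ_{i=1}^r R([k_1,t_1],...,[k_i − 1, t_i],...,[k_r,t_r]) − (r − 2). -/
/-!
Fix a vertex `v` of an `r`-coloured `K_N` and split its other `N - 1` neighbours by the colour of
the edge to `v`. If `N - 1 > ∑ (Rᵢ - 1)`, some colour class `i` has at least `Rᵢ` vertices, where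
`Rᵢ` is the Ramsey number with `kᵢ` lowered by one. Inside that class there is either a
monochromatic `K_{[kⱼ,tⱼ]}` in a colour `j ≠ i`, or a `K_{[kᵢ-1,tᵢ]}` in colour `i`, which `v`
(joined to it entirely in colour `i`, and kept outside the removed clique) extends to `K_{[kᵢ,tᵢ]}`.
The same recursion, by induction on `∑ (kᵢ - tᵢ)`, shows that these Ramsey numbers are finite.
-/

open Finset

/-- A monochromatic copy of `K_{[k,t]}` (complete graph on `k` vertices minus the
edges of a clique of order `t`) in color `i`, inside an `r`-edge-coloring `C` of `K_N`. -/
def HasMonoDropped {N r : ℕ} (C : Fin N → Fin N → Fin r) (i : Fin r) (k t : ℕ) : Prop :=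
  ∃ S T : Finset (Fin N), T ⊆ S ∧ S.card = k ∧ T.card = t ∧
    ∀ u ∈ S, ∀ v ∈ S, u ≠ v → ¬(u ∈ T ∧ v ∈ T) → C u v = i

/-- `R([k 0, t 0], …, [k (r-1), t (r-1)])`: the smallest `n` such that every
`r`-edge-coloring of `K_n` contains a monochromatic `K_{[k i, t i]}` in color `i`
for some `i`. -/
noncomputable def RamseyDropped (r : ℕ) (k t : Fin r → ℕ) : ℕ :=
  sInf {n | ∀ C : Fin n → Fin n → Fin r, (∀ u v, C u v = C v u) →
    ∃ i : Fin r, HasMonoDropped C i (k i) (t i)}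

/-- The coloring `C` of `K_N` contains a `k`-clique whose induced coloring is a
`χ_r`-coloring: there are a labeling `e` of `k` vertices and `φ` such that the edge
`{e i, e j}` with `i < j` has color `φ i`. -/
def HasChiClique {N r : ℕ} (k : ℕ) (C : Fin N → Fin N → Fin r) : Prop :=
  ∃ e : Fin k → Fin N, Function.Injective e ∧
    ∃ φ : Fin k → Fin r, ∀ i j : Fin k, i < j → C (e i) (e j) = φ i

/-- `n` is large enough for `χ_r(k)`: every `r`-edge-coloring of `K_N`, `N ≥ n`,
contains a `k`-clique whose induced coloring is a `χ_r`-coloring. -/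
def ChiProp (r k n : ℕ) : Prop :=
  ∀ N, n ≤ N → ∀ C : Fin N → Fin N → Fin r, (∀ u v, C u v = C v u) → HasChiClique k C

/-- `χ_r(k)`, the smallest `n` satisfying `ChiProp r k n`. -/
noncomputable def chiNum (r k : ℕ) : ℕ := sInf {n | ChiProp r k n}

/-- The arrow relation `n → ([k₁,t₁],…,[k_r,t_r])`; `RamseyDropped r k t` is the least such `n`. -/
def RamseyArrows (r : ℕ) (k t : Fin r → ℕ) (n : ℕ) : Prop :=
  ∀ C : Fin n → Fin n → Fin r, (∀ u v, C u v = C v u) →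
    ∃ i : Fin r, HasMonoDropped C i (k i) (t i)

lemma exists_le_card_fiber_of_sum_lt {α β : Type*} [DecidableEq β] [Fintype β]
    (s : Finset α) (f : α → β) (R : β → ℕ) (h : ∑ b, R b < #s + Fintype.card β) :
    ∃ b, R b ≤ #{a ∈ s | f a = b} := by
  by_contra! hlt
  have hsum : ∑ b, (#{a ∈ s | f a = b} + 1) ≤ ∑ b, R b := sum_le_sum fun b _ => hlt b
  rw [sum_add_distrib, ← card_eq_sum_card_fiberwise fun a _ => mem_univ (f a)] at hsum
  simp only [sum_const, card_univ, smul_eq_mul, mul_one] at hsum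
  omega

namespace HasMonoDropped

variable {N M r : ℕ} {C : Fin N → Fin N → Fin r} {f : Fin M → Fin N} {i : Fin r} {k t : ℕ}

lemma of_comp (hf : Function.Injective f) (h : HasMonoDropped (fun a b => C (f a) (f b)) i k t) :
    HasMonoDropped C i k t := by
  obtain ⟨S, T, hTS, hS, hT, hcol⟩ := h
  refine ⟨S.map ⟨f, hf⟩, T.map ⟨f, hf⟩, map_subset_map.mpr hTS, by rw [card_map, hS],
    by rw [card_map, hT], ?_⟩
  simp only [mem_map, Function.Embedding.coeFn_mk]
  rintro _ ⟨a, ha, rfl⟩ _ ⟨b, hb, rfl⟩ hab hT'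
  exact hcol a ha b hb (ne_of_apply_ne f hab) fun h => hT' ⟨⟨a, h.1, rfl⟩, ⟨b, h.2, rfl⟩⟩

/-- The cone over a copy of `K_{[k,t]}` with apex outside the removed clique is a `K_{[k+1,t]}`. -/
lemma cons_of_comp (hsym : ∀ u w, C u w = C w u) (hf : Function.Injective f) {v : Fin N}
    (hfv : ∀ a, f a ≠ v) (hvf : ∀ a, C v (f a) = i)
    (h : HasMonoDropped (fun a b => C (f a) (f b)) i k t) : HasMonoDropped C i (k + 1) t := by
  obtain ⟨S, T, hTS, hS, hT, hcol⟩ := h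
  have hv : v ∉ S.map ⟨f, hf⟩ := by
    simp only [mem_map, Function.Embedding.coeFn_mk, not_exists, not_and]
    exact fun a _ => hfv a
  refine ⟨insert v (S.map ⟨f, hf⟩), T.map ⟨f, hf⟩, (map_subset_map.mpr hTS).trans
    (subset_insert _ _), by rw [card_insert_of_notMem hv, card_map, hS], by rw [card_map, hT], ?_⟩
  simp only [mem_insert, mem_map, Function.Embedding.coeFn_mk]
  rintro u (rfl | ⟨a, ha, rfl⟩) w (rfl | ⟨b, hb, rfl⟩) huw hT'
  · exact absurd rfl huw
  · exact hvf b
  · rw [hsym]; exact hvf a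
  · exact hcol a ha b hb (ne_of_apply_ne f huw) fun h => hT' ⟨⟨a, h.1, rfl⟩, ⟨b, h.2, rfl⟩⟩

end HasMonoDropped

section RamseyArrows

variable {r : ℕ} {k t : Fin r → ℕ}

lemma not_ramseyArrows_zero (hk : ∀ i, 1 ≤ k i) : ¬ RamseyArrows r k t 0 := by
  intro h
  obtain ⟨i, S, -, -, hS, -, -⟩ := h (fun a => a.elim0) fun a => a.elim0
  rw [Finset.eq_empty_of_isEmpty S, card_empty] at hS
  exact absurd (hk i) (by omega)

/-- `K_{[k,k]}` has no edges. -/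
lemma ramseyArrows_of_eq (i : Fin r) (hi : t i = k i) : RamseyArrows r k t (k i) :=
  fun _ _ => ⟨i, univ, univ, subset_rfl, card_fin _, by rw [card_fin, hi],
    fun _ _ _ _ _ hT => absurd ⟨mem_univ _, mem_univ _⟩ hT⟩

lemma ramseyArrows_of_update [DecidableEq (Fin r)] (hk : ∀ i, 1 ≤ k i) {R : Fin r → ℕ}
    (hR : ∀ i, RamseyArrows r (Function.update k i (k i - 1)) t (R i)) {N : ℕ} (hN : 0 < N)
    (hsum : ∑ i, R i + 2 ≤ N + r) : RamseyArrows r k t N := by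
  intro C hsym
  let v : Fin N := ⟨0, hN⟩
  obtain ⟨i, hi⟩ := exists_le_card_fiber_of_sum_lt (univ.erase v) (C v) R (by
    rw [card_erase_of_mem (mem_univ v), card_univ, Fintype.card_fin, Fintype.card_fin]
    omega)
  obtain ⟨B, hBA, hB⟩ := exists_subset_card_eq hi
  let f := B.orderEmbOfFin hB
  have hfA : ∀ a, f a ∈ {u ∈ univ.erase v | C v u = i} := fun a => hBA (B.orderEmbOfFin_mem hB a)
  simp only [mem_filter, mem_erase] at hfA
  obtain ⟨j, hj⟩ := hR i (fun a b => C (f a) (f b)) fun _ _ => hsym _ _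
  rcases eq_or_ne j i with rfl | hne
  · rw [Function.update_self] at hj
    refine ⟨j, ?_⟩
    rw [← Nat.sub_add_cancel (hk j)]
    exact hj.cons_of_comp hsym f.injective (fun a => (hfA a).1.1) fun a => (hfA a).2
  · rw [Function.update_of_ne hne] at hj
    exact ⟨j, hj.of_comp f.injective⟩

lemma exists_ramseyArrows (htk : t ≤ k) : ∃ n, RamseyArrows r k t n := by
  classical
  induction hm : ∑ i, (k i - t i) using Nat.strong_induction_on generalizing k with
  | _ m ih =>
  by_cases heq : ∃ i, t i = k i
  · obtain ⟨i, hi⟩ := heq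
    exact ⟨k i, ramseyArrows_of_eq i hi⟩
  push Not at heq
  have hlt : ∀ i, t i < k i := fun i => lt_of_le_of_ne (htk i) (heq i)
  have hR : ∀ i, ∃ n, RamseyArrows r (Function.update k i (k i - 1)) t n := by
    intro i
    have hle : Function.update k i (k i - 1) ≤ k :=
      update_le_iff.2 ⟨Nat.sub_le _ _, fun _ _ => le_rfl⟩
    refine ih _ ?_ (le_update_iff.2 ⟨by have := hlt i; omega, fun j _ => htk j⟩) rfl
    rw [← hm]
    refine sum_lt_sum (fun j _ => Nat.sub_le_sub_right (hle j) _) ⟨i, mem_univ i, ?_⟩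
    rw [Function.update_self]
    have := hlt i
    omega
  choose R hR using hR
  exact ⟨∑ i, R i + 2, ramseyArrows_of_update (fun i => by have := hlt i; omega) hR
    (by omega) (by omega)⟩

end RamseyArrows

/-- Recursive inequality (Lemma 1): for r ≥ 2 and positive integers k_i ≥ t_i + 1 ≥ 2,
R([k_1,t_1],…,[k_r,t_r]) ≤ Σ_i R([k_1,t_1],…,[k_i−1,t_i],…,[k_r,t_r]) − (r−2). -/
theorem stmt0 (r : ℕ) (hr : 2 ≤ r) (k t : Fin r → ℕ)
    (ht : ∀ i, 1 ≤ t i) (hk : ∀ i, t i + 1 ≤ k i) :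
    RamseyDropped r k t ≤
      (∑ i : Fin r, RamseyDropped r (Function.update k i (k i - 1)) t) - (r - 2) := by
  classical
  have hupdate : ∀ i, t ≤ Function.update k i (k i - 1) := fun i =>
    le_update_iff.2 ⟨by have := hk i; omega, fun j _ => by have := hk j; omega⟩
  set R := fun i => RamseyDropped r (Function.update k i (k i - 1)) t
  change RamseyDropped r k t ≤ ∑ i, R i - (r - 2)
  have hR : ∀ i, RamseyArrows r (Function.update k i (k i - 1)) t (R i) :=
    fun i => Nat.sInf_mem (exists_ramseyArrows (hupdate i))
  have hR_pos : ∀ i, 1 ≤ R i := fun i => Nat.one_le_iff_ne_zero.mpr fun h0 =>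
    not_ramseyArrows_zero (fun j => (ht j).trans (hupdate i j)) (h0 ▸ hR i)
  have hr_le : r ≤ ∑ i, R i := by simpa using sum_le_sum fun i (_ : i ∈ univ) => hR_pos i
  refine Nat.sInf_le (ramseyArrows_of_update (fun i => by have := hk i; omega) hR ?_ ?_) <;>
    omega
end

section
/- For all integers r ≥ 2 and positive integers k_1,...,k_r, t_1,...,t_r with k_i ≥ t_i for all i, R([k_1,t_1],...,[k_r,t_r]) ≤ (max_{1≤i≤r} t_i) · multinomial(k_1−t_1, k_2−t_2, ..., k_r−t_r), where multinomial(n_1,...,n_r) = (n_1+⋯+n_r)!/(n_1!⋯n_r!). -/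
open Finset

open scoped Nat

/-- Pascal's identity for multinomial coefficients. -/
lemma pascal_multinomial {r : ℕ} (a : Fin r → ℕ) (ha : ∀ i, 1 ≤ a i) (hr : 1 ≤ r) :
    ∑ i, Nat.multinomial Finset.univ (Function.update a i (a i - 1)) =
      Nat.multinomial Finset.univ a := by
  have hP : 0 < ∏ j, (a j)! := Finset.prod_pos fun j _ => Nat.factorial_pos _
  apply Nat.eq_of_mul_eq_mul_right hP
  have hs1 : 1 ≤ ∑ j, a j := le_trans (ha ⟨0, by omega⟩)
    (Finset.single_le_sum (fun j _ => Nat.zero_le _) (Finset.mem_univ _))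
  have key : ∀ i : Fin r,
      Nat.multinomial Finset.univ (Function.update a i (a i - 1)) * ∏ j, (a j)! =
        a i * (∑ j, a j - 1)! := by
    intro i
    set a' := Function.update a i (a i - 1) with ha'
    have hsum' : ∑ j, a' j = ∑ j, a j - 1 := by
      have h1 : ∑ j, a' j = (a i - 1) + ∑ j ∈ Finset.univ.erase i, a j := by
        rw [ha', Finset.sum_update_of_mem (Finset.mem_univ i), ← Finset.erase_eq]
      have h2 : a i + ∑ j ∈ Finset.univ.erase i, a j = ∑ j, a j :=
        Finset.add_sum_erase _ _ (Finset.mem_univ i)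
      have := ha i
      omega
    have hprod' : a i * ∏ j, (a' j)! = ∏ j, (a j)! := by
      have h1 : ∏ j, (a' j)! = (a i - 1)! * ∏ j ∈ Finset.univ.erase i, (a j)! := by
        have : (fun j => (a' j)!) = Function.update (fun j => (a j)!) i ((a i - 1)!) := by
          funext j
          by_cases hj : j = i
          · subst hj; simp [ha']
          · simp [ha', Function.update_of_ne hj]
        rw [this, Finset.prod_update_of_mem (Finset.mem_univ i), ← Finset.erase_eq]
      have h2 : (a i)! * ∏ j ∈ Finset.univ.erase i, (a j)! = ∏ j, (a j)! :=
        Finset.mul_prod_erase Finset.univ (fun j => (a j)!) (Finset.mem_univ i)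
      have h3 : a i * (a i - 1)! = (a i)! := by
        obtain ⟨b, hb⟩ : ∃ b, a i = b + 1 := ⟨a i - 1, by have := ha i; omega⟩
        rw [hb, Nat.add_sub_cancel, Nat.factorial_succ]
      rw [h1, ← mul_assoc, h3, h2]
    have hspec : (∏ j, (a' j)!) * Nat.multinomial Finset.univ a' = (∑ j, a' j)! :=
      Nat.multinomial_spec _ _
    calc Nat.multinomial Finset.univ a' * ∏ j, (a j)!
        = a i * ((∏ j, (a' j)!) * Nat.multinomial Finset.univ a') := by
          rw [← hprod']; ring
      _ = a i * (∑ j, a j - 1)! := by rw [hspec, hsum']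
  calc (∑ i, Nat.multinomial Finset.univ (Function.update a i (a i - 1))) * ∏ j, (a j)!
      = ∑ i, Nat.multinomial Finset.univ (Function.update a i (a i - 1)) * ∏ j, (a j)! :=
        Finset.sum_mul _ _ _
    _ = ∑ i : Fin r, a i * (∑ j, a j - 1)! := Finset.sum_congr rfl fun i _ => key i
    _ = (∑ i, a i) * (∑ j, a j - 1)! := (Finset.sum_mul _ _ _).symm
    _ = (∑ j, a j)! := by
        rw [show ∑ j, a j = (∑ j, a j - 1) + 1 by omega]
        rw [Nat.factorial_succ, Nat.add_sub_cancel]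
    _ = Nat.multinomial Finset.univ a * ∏ j, (a j)! := by
        rw [mul_comm]; exact (Nat.multinomial_spec _ _).symm

/-- The main greedy induction. -/
lemma main_greedy {r N : ℕ} (hr : 2 ≤ r) (t : Fin r → ℕ) (ht : ∀ i, 1 ≤ t i)
    (C : Fin N → Fin N → Fin r) (hsym : ∀ u v, C u v = C v u) :
    ∀ s : ℕ, ∀ a : Fin r → ℕ, (∑ i, a i) = s →
    ∀ pool : Finset (Fin N),
      (Finset.univ.sup t) * Nat.multinomial Finset.univ a ≤ pool.card →
    ∃ i : Fin r, ∃ S T' : Finset (Fin N), S ⊆ pool ∧ T' ⊆ S ∧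
      S.card = a i + t i ∧ T'.card = t i ∧
      ∀ u ∈ S, ∀ v ∈ S, u ≠ v → ¬(u ∈ T' ∧ v ∈ T') → C u v = i := by
  have hT1 : 1 ≤ Finset.univ.sup t :=
    le_trans (ht ⟨0, by omega⟩) (Finset.le_sup (Finset.mem_univ _))
  -- if some a i = 0 we are done immediately
  have done0 : ∀ (a : Fin r → ℕ) (pool : Finset (Fin N)),
      (Finset.univ.sup t) * Nat.multinomial Finset.univ a ≤ pool.card →
      ∀ i : Fin r, a i = 0 →
      ∃ i : Fin r, ∃ S T' : Finset (Fin N), S ⊆ pool ∧ T' ⊆ S ∧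
        S.card = a i + t i ∧ T'.card = t i ∧
        ∀ u ∈ S, ∀ v ∈ S, u ≠ v → ¬(u ∈ T' ∧ v ∈ T') → C u v = i := by
    intro a pool hpool i hi
    have hm : 1 ≤ Nat.multinomial Finset.univ a := Nat.multinomial_pos _ _
    have hti : t i ≤ pool.card := by
      have h1 : t i ≤ Finset.univ.sup t := Finset.le_sup (Finset.mem_univ _)
      nlinarith
    obtain ⟨S, hSsub, hScard⟩ := Finset.exists_subset_card_eq hti
    refine ⟨i, S, S, hSsub, le_refl _, by omega, hScard, ?_⟩
    intro u hu v hv hne habs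
    exact absurd ⟨hu, hv⟩ habs
  intro s
  induction s with
  | zero =>
      intro a hs pool hpool
      have : a ⟨0, by omega⟩ = 0 := by
        have := Finset.single_le_sum (f := a) (fun j _ => Nat.zero_le _)
          (Finset.mem_univ (⟨0, by omega⟩ : Fin r))
        omega
      exact done0 a pool hpool _ this
  | succ s ih =>
      intro a hs pool hpool
      by_cases h0 : ∃ i, a i = 0
      · obtain ⟨i, hi⟩ := h0
        exact done0 a pool hpool i hi
      push_neg at h0
      have ha1 : ∀ i, 1 ≤ a i := fun i => Nat.one_le_iff_ne_zero.mpr (h0 i)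
      have hm : 1 ≤ Nat.multinomial Finset.univ a := Nat.multinomial_pos _ _
      have hpoolpos : 0 < pool.card := by nlinarith
      obtain ⟨v, hv⟩ := Finset.card_pos.mp hpoolpos
      set Nb : Fin r → Finset (Fin N) :=
        fun i => (pool.erase v).filter (fun u => C v u = i) with hNb
      have hcardsum : (pool.erase v).card = ∑ i : Fin r, (Nb i).card :=
        Finset.card_eq_sum_card_fiberwise (fun x _ => Finset.mem_univ (C v x))
      have herase : (pool.erase v).card + 1 = pool.card := Finset.card_erase_add_one hv
      -- Pascal identity multiplied by sup t
      have hpascal : ∑ i, (Finset.univ.sup t) *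
          Nat.multinomial Finset.univ (Function.update a i (a i - 1)) =
          (Finset.univ.sup t) * Nat.multinomial Finset.univ a := by
        rw [← Finset.mul_sum, pascal_multinomial a ha1 (by omega)]
      -- pigeonhole
      have hpig : ∃ i : Fin r, (Finset.univ.sup t) *
          Nat.multinomial Finset.univ (Function.update a i (a i - 1)) ≤ (Nb i).card := by
        by_contra hcon
        push_neg at hcon
        have hle : ∀ i : Fin r, (Nb i).card + 1 ≤ (Finset.univ.sup t) *
            Nat.multinomial Finset.univ (Function.update a i (a i - 1)) :=
          fun i => hcon i
        have hsumle : ∑ i : Fin r, ((Nb i).card + 1) ≤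
            ∑ i, (Finset.univ.sup t) *
              Nat.multinomial Finset.univ (Function.update a i (a i - 1)) :=
          Finset.sum_le_sum fun i _ => hle i
        rw [Finset.sum_add_distrib, Finset.sum_const, Finset.card_univ,
          Fintype.card_fin, smul_eq_mul, mul_one, hpascal] at hsumle
        omega
      obtain ⟨i, hNi⟩ := hpig
      have hsum' : ∑ j, Function.update a i (a i - 1) j = s := by
        have h1 : ∑ j, Function.update a i (a i - 1) j =
            (a i - 1) + ∑ j ∈ Finset.univ.erase i, a j := by
          rw [Finset.sum_update_of_mem (Finset.mem_univ i), ← Finset.erase_eq]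
        have h2 : a i + ∑ j ∈ Finset.univ.erase i, a j = ∑ j, a j :=
          Finset.add_sum_erase _ _ (Finset.mem_univ i)
        have := ha1 i
        omega
      obtain ⟨j, S', T', hsub, hTsub, hScard, hTcard, hcond⟩ :=
        ih (Function.update a i (a i - 1)) hsum' (Nb i) hNi
      have hNbsub : Nb i ⊆ pool := le_trans (Finset.filter_subset _ _) (Finset.erase_subset _ _)
      by_cases hji : j = i
      · -- add v to the structure
        subst hji
        have hvS' : v ∉ S' := fun hmem =>
          Finset.notMem_erase v pool
            (Finset.mem_of_mem_filter v (hsub hmem))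
        have hcol : ∀ w ∈ S', C v w = j := fun w hw => (Finset.mem_filter.mp (hsub hw)).2
        refine ⟨j, insert v S', T', ?_, hTsub.trans (Finset.subset_insert _ _), ?_, hTcard, ?_⟩
        · exact Finset.insert_subset hv (hsub.trans hNbsub)
        · rw [Finset.card_insert_of_notMem hvS', hScard, Function.update_self]
          have := ha1 j; omega
        · intro u hu w hw hne hnb
          rcases Finset.mem_insert.mp hu with hu' | hu' <;>
            rcases Finset.mem_insert.mp hw with hw' | hw'
          · exact absurd (hu'.trans hw'.symm) hne
          · rw [hu']; exact hcol w hw'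
          · rw [hw', hsym u v]; exact hcol u hu'
          · exact hcond u hu' w hw' hne hnb
      · refine ⟨j, S', T', hsub.trans hNbsub, hTsub, ?_, hTcard, hcond⟩
        rw [hScard, Function.update_of_ne hji]

/-- Theorem 1: R([k_1,t_1],…,[k_r,t_r]) ≤ (max_i t_i) · multinomial(k_1−t_1,…,k_r−t_r). -/
theorem stmt1 (r : ℕ) (hr : 2 ≤ r) (k t : Fin r → ℕ)
    (ht : ∀ i, 1 ≤ t i) (hk : ∀ i, t i ≤ k i) :
    RamseyDropped r k t ≤
      (Finset.univ.sup t) * Nat.multinomial Finset.univ (fun i => k i - t i) := by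
  set n := (Finset.univ.sup t) * Nat.multinomial Finset.univ (fun i => k i - t i) with hn
  apply Nat.sInf_le
  intro C hsym
  obtain ⟨i, S, T', hsub, hTsub, hScard, hTcard, hcond⟩ :=
    main_greedy hr t ht C hsym (∑ i, (k i - t i)) (fun i => k i - t i) rfl
      Finset.univ (by rw [Finset.card_univ, Fintype.card_fin])
  refine ⟨i, S, T', hTsub, ?_, hTcard, hcond⟩
  rw [hScard]
  have := hk i
  omega
end

section
/- For all integers k ≥ t ≥ 2 and r ≥ 2, the diagonal Ramsey number R_r([k,t]) satisfies R_r([k,t]) ≤ t · (r(k−t))! / ((k−t)!)^r. -/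
open Finset

/-- `n! = n * (n-1)!` for `n ≥ 1`. -/
lemma my_fact_eq_mul {n : ℕ} (h : 1 ≤ n) : Nat.factorial n = n * Nat.factorial (n - 1) := by
  cases n with
  | zero => omega
  | succ m => simp [Nat.factorial_succ]

/-- Pascal-type recurrence for the multinomial coefficient. -/
lemma multinomial_rec {r : ℕ} (hr : 0 < r) (a : Fin r → ℕ) (h : ∀ i, 1 ≤ a i) :
    Nat.multinomial Finset.univ a =
      ∑ i, Nat.multinomial Finset.univ (Function.update a i (a i - 1)) := by
  have hP : 0 < ∏ i, Nat.factorial (a i) :=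
    Finset.prod_pos fun i _ => Nat.factorial_pos _
  apply Nat.eq_of_mul_eq_mul_left hP
  rw [Nat.multinomial_spec, Finset.mul_sum]
  have hsum1 : 1 ≤ ∑ i, a i := by
    calc 1 ≤ r := hr
    _ = ∑ _i : Fin r, 1 := by simp
    _ ≤ ∑ i, a i := Finset.sum_le_sum fun i _ => h i
  have key : ∀ i : Fin r,
      (∏ j, Nat.factorial (a j)) * Nat.multinomial Finset.univ (Function.update a i (a i - 1))
        = a i * Nat.factorial ((∑ j, a j) - 1) := by
    intro i
    have hsumu : ∑ j, Function.update a i (a i - 1) j = (∑ j, a j) - 1 := by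
      rw [Finset.sum_update_of_mem (Finset.mem_univ i), ← Finset.erase_eq]
      have : ∑ j, a j = a i + ∑ j ∈ Finset.univ.erase i, a j :=
        (Finset.add_sum_erase _ _ (Finset.mem_univ i)).symm
      have hi := h i
      omega
    have hprodu : ∏ j, Nat.factorial (a j)
        = a i * ∏ j, Nat.factorial (Function.update a i (a i - 1) j) := by
      have h1 : (Nat.factorial ∘ Function.update a i (a i - 1))
          = Function.update (fun j => Nat.factorial (a j)) i (Nat.factorial (a i - 1)) :=
        Function.comp_update Nat.factorial a i (a i - 1)
      have h2 : ∏ j, Nat.factorial (Function.update a i (a i - 1) j)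
          = Nat.factorial (a i - 1) * ∏ j ∈ Finset.univ.erase i, Nat.factorial (a j) := by
        calc ∏ j, Nat.factorial (Function.update a i (a i - 1) j)
            = ∏ j, Function.update (fun j => Nat.factorial (a j)) i (Nat.factorial (a i - 1)) j := by
              rw [← h1]; rfl
          _ = _ := by
              rw [Finset.prod_update_of_mem (Finset.mem_univ i), ← Finset.erase_eq]
      have h3 : ∏ j, Nat.factorial (a j)
          = Nat.factorial (a i) * ∏ j ∈ Finset.univ.erase i, Nat.factorial (a j) :=
        (Finset.mul_prod_erase _ _ (Finset.mem_univ i)).symm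
      rw [h2, h3, ← mul_assoc, ← my_fact_eq_mul (h i)]
    rw [hprodu, mul_assoc, Nat.multinomial_spec, hsumu]
  calc Nat.factorial (∑ i, a i)
      = (∑ i, a i) * Nat.factorial ((∑ i, a i) - 1) := my_fact_eq_mul hsum1
    _ = ∑ i, a i * Nat.factorial ((∑ j, a j) - 1) := by rw [Finset.sum_mul]
    _ = _ := by
        apply Finset.sum_congr rfl
        intro i _
        exact (key i).symm

/-- Key lemma: any symmetric `r`-coloring of a vertex set of size at least
`t * multinomial(a)` contains, for some color `i`, a monochromatic clique `S`
of size `a i` in color `i` together with `t` further vertices all joined to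
`S` in color `i`. -/
lemma key_book {N r t : ℕ} (hr : 2 ≤ r) (ht : 1 ≤ t)
    (C : Fin N → Fin N → Fin r) (hsym : ∀ u v, C u v = C v u) :
    ∀ (n : ℕ) (a : Fin r → ℕ), (∑ i, a i) = n → ∀ V : Finset (Fin N),
      t * Nat.multinomial Finset.univ a ≤ V.card →
      ∃ (i : Fin r) (S W : Finset (Fin N)), S ⊆ V ∧ W ⊆ V ∧ Disjoint S W ∧
        S.card = a i ∧ W.card = t ∧
        (∀ u ∈ S, ∀ v ∈ S, u ≠ v → C u v = i) ∧
        (∀ u ∈ S, ∀ w ∈ W, C u w = i) := by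
  intro n
  induction n using Nat.strong_induction_on with
  | _ n ih =>
    intro a ha V hV
    by_cases hall : ∀ i, 1 ≤ a i
    · -- inductive step: all `a i ≥ 1`
      have hmpos : 0 < Nat.multinomial Finset.univ a := Nat.multinomial_pos _ _
      have hVpos : 1 ≤ V.card := le_trans (Nat.mul_pos ht hmpos) hV
      obtain ⟨x, hx⟩ := Finset.card_pos.mp hVpos
      set Vc : Fin r → Finset (Fin N) :=
        fun j => (V.erase x).filter (fun u => C u x = j) with hVcdef
      have hsplit : (V.erase x).card = ∑ j, (Vc j).card :=
        Finset.card_eq_sum_card_fiberwise (fun u _ => Finset.mem_univ (C u x))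
      have hrec := multinomial_rec (by omega) a hall
      have hpig : ∃ j, t * Nat.multinomial Finset.univ
          (Function.update a j (a j - 1)) ≤ (Vc j).card := by
        by_contra hcon
        push_neg at hcon
        have hb : ∑ j, ((Vc j).card + 1) ≤
            ∑ j, t * Nat.multinomial Finset.univ (Function.update a j (a j - 1)) :=
          Finset.sum_le_sum fun j _ => hcon j
        have h1 : ∑ j, ((Vc j).card + 1) = (∑ j, (Vc j).card) + r := by
          rw [Finset.sum_add_distrib]; simp
        have h2 : ∑ j, t * Nat.multinomial Finset.univ (Function.update a j (a j - 1))
            = t * Nat.multinomial Finset.univ a := by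
          rw [← Finset.mul_sum, ← hrec]
        have herase : (V.erase x).card = V.card - 1 := Finset.card_erase_of_mem hx
        omega
      obtain ⟨j, hj⟩ := hpig
      have hsub : Vc j ⊆ V := (Finset.filter_subset _ _).trans (Finset.erase_subset _ _)
      have hsum' : ∑ i, Function.update a j (a j - 1) i = n - 1 := by
        rw [Finset.sum_update_of_mem (Finset.mem_univ j), ← Finset.erase_eq]
        have h3 : ∑ i, a i = a j + ∑ i ∈ Finset.univ.erase j, a i :=
          (Finset.add_sum_erase _ a (Finset.mem_univ j)).symm
        have hj1 := hall j
        omega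
      have hn1 : 1 ≤ n := by
        have h4 : (∑ _i : Fin r, 1) ≤ ∑ i, a i := Finset.sum_le_sum fun i _ => hall i
        simp only [Finset.sum_const, Finset.card_univ, Fintype.card_fin, smul_eq_mul,
          mul_one] at h4
        omega
      obtain ⟨i, S, W, hSV, hWV, hdSW, hScard, hWcard, hclq, hSW⟩ :=
        ih (n - 1) (by omega) _ hsum' (Vc j) hj
      have hVcmem : ∀ u ∈ Vc j, u ≠ x ∧ C u x = j := by
        intro u hu
        have h5 := Finset.mem_filter.mp hu
        exact ⟨(Finset.mem_erase.mp h5.1).1, h5.2⟩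
      by_cases hij : i = j
      · subst hij
        have hxS : x ∉ S := fun h => (hVcmem x (hSV h)).1 rfl
        have hxW : x ∉ W := fun h => (hVcmem x (hWV h)).1 rfl
        refine ⟨i, insert x S, W, Finset.insert_subset hx (hSV.trans hsub),
          hWV.trans hsub, Finset.disjoint_insert_left.mpr ⟨hxW, hdSW⟩, ?_, hWcard, ?_, ?_⟩
        · rw [Finset.card_insert_of_notMem hxS]
          simp only [Function.update_self] at hScard
          have := hall i
          omega
        · intro u hu v hv huv
          rcases Finset.mem_insert.mp hu with rfl | hu'
          · rcases Finset.mem_insert.mp hv with rfl | hv'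
            · exact absurd rfl huv
            · rw [hsym]; exact (hVcmem v (hSV hv')).2
          · rcases Finset.mem_insert.mp hv with rfl | hv'
            · exact (hVcmem u (hSV hu')).2
            · exact hclq u hu' v hv' huv
        · intro u hu w hw
          rcases Finset.mem_insert.mp hu with rfl | hu'
          · rw [hsym]; exact (hVcmem w (hWV hw)).2
          · exact hSW u hu' w hw
      · refine ⟨i, S, W, hSV.trans hsub, hWV.trans hsub, hdSW, ?_, hWcard, hclq, hSW⟩
        rw [hScard, Function.update_of_ne hij]
    · -- base case: some `a i = 0`
      push_neg at hall
      obtain ⟨i, hi⟩ := hall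
      have hi0 : a i = 0 := by omega
      have htV : t ≤ V.card := by
        have h1 : 0 < Nat.multinomial Finset.univ a := Nat.multinomial_pos _ _
        calc t = t * 1 := (mul_one t).symm
          _ ≤ t * Nat.multinomial Finset.univ a := Nat.mul_le_mul_left t h1
          _ ≤ V.card := hV
      obtain ⟨W, hWV, hWcard⟩ := Finset.exists_subset_card_eq htV
      exact ⟨i, ∅, W, Finset.empty_subset V, hWV, Finset.disjoint_empty_left _,
        by simp [hi0], hWcard, by simp, by simp⟩

/-- Corollary 1: for k ≥ t ≥ 2 and r ≥ 2,
R_r([k,t]) ≤ t · (r(k−t))! / ((k−t)!)^r. -/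
theorem stmt2 (r k t : ℕ) (hr : 2 ≤ r) (ht : 2 ≤ t) (hk : t ≤ k) :
    RamseyDropped r (fun _ => k) (fun _ => t) ≤
      t * (Nat.factorial (r * (k - t)) / (Nat.factorial (k - t)) ^ r) := by
  have hM : t * Nat.multinomial Finset.univ (fun _ : Fin r => k - t)
      = t * (Nat.factorial (r * (k - t)) / (Nat.factorial (k - t)) ^ r) := by
    congr 1
    simp [Nat.multinomial, Finset.sum_const, Finset.prod_const, Finset.card_univ,
      smul_eq_mul]
  rw [← hM]
  apply Nat.sInf_le
  intro C hsym
  obtain ⟨i, S, W, hSV, hWV, hdSW, hScard, hWcard, hclq, hSW⟩ :=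
    key_book (t := t) hr (by omega) C hsym _ (fun _ => k - t) rfl Finset.univ (by simp)
  refine ⟨i, S ∪ W, W, Finset.subset_union_right, ?_, hWcard, ?_⟩
  · show (S ∪ W).card = k
    rw [Finset.card_union_of_disjoint hdSW, hScard, hWcard]
    omega
  · intro u hu v hv huv hnot
    rcases Finset.mem_union.mp hu with hu' | hu'
    · rcases Finset.mem_union.mp hv with hv' | hv'
      · exact hclq u hu' v hv' huv
      · exact hSW u hu' v hv'
    · rcases Finset.mem_union.mp hv with hv' | hv'
      · rw [hsym]; exact hSW v hv' u hu'
      · exact absurd ⟨hu', hv'⟩ hnot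
end

section
/- Assuming R([4,2],[8,1]) ≤ 42 and R([3,2],[k,1]) = 2k−1 for all k ≥ 2, we have R([4,2],[k,1]) ≤ k² − 22 for all integers k ≥ 8. -/
open Finset

/-!
Fix a vertex `v`. Its color-0 neighbours either carry a color-0 `K_{[a,2]}`, which `v` extends to
a `K_{[a+1,2]}`, or a color-1 `K_{b+1}`; its color-1 neighbours either carry a color-0
`K_{[a+1,2]}` or a color-1 `K_b`, which `v` extends to a `K_{b+1}`. Hence
`R([a+1,2],[b+1,1]) ≤ R([a,2],[b+1,1]) + R([a+1,2],[b,1])`. With `R([3,2],[k+1,1]) = 2k+1` this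
gives `R([4,2],[k+1,1]) ≤ R([4,2],[k,1]) + 2k + 1`, and since `(k+1)² - 22 = (k² - 22) + 2k + 1`
the bound propagates from `R([4,2],[8,1]) ≤ 42 = 8² - 22`.
-/

section Coloring

variable {N r : ℕ} {C : Fin N → Fin N → Fin r} {i : Fin r}

def IsMonoDropped (C : Fin N → Fin N → Fin r) (i : Fin r) (S T : Finset (Fin N)) : Prop :=
  T ⊆ S ∧ ∀ u ∈ S, ∀ v ∈ S, u ≠ v → ¬(u ∈ T ∧ v ∈ T) → C u v = i

theorem hasMonoDropped_iff {k t : ℕ} :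
    HasMonoDropped C i k t ↔ ∃ S T, IsMonoDropped C i S T ∧ S.card = k ∧ T.card = t := by
  constructor
  · rintro ⟨S, T, hTS, hS, hT, hmono⟩
    exact ⟨S, T, ⟨hTS, hmono⟩, hS, hT⟩
  · rintro ⟨S, T, ⟨hTS, hmono⟩, hS, hT⟩
    exact ⟨S, T, hTS, hS, hT, hmono⟩

theorem IsMonoDropped.map {n : ℕ} {f : Fin n ↪ Fin N} {S T : Finset (Fin n)}
    (h : IsMonoDropped (fun x y => C (f x) (f y)) i S T) :
    IsMonoDropped C i (S.map f) (T.map f) := by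
  refine ⟨map_subset_map.2 h.1, ?_⟩
  rintro _ hfx _ hfy hxy hT
  obtain ⟨x, hx, rfl⟩ := mem_map.1 hfx
  obtain ⟨y, hy, rfl⟩ := mem_map.1 hfy
  exact h.2 x hx y hy (ne_of_apply_ne f hxy)
    fun hxyT => hT ⟨mem_map_of_mem f hxyT.1, mem_map_of_mem f hxyT.2⟩

theorem IsMonoDropped.insert (hsym : ∀ u v, C u v = C v u) {S T : Finset (Fin N)}
    (h : IsMonoDropped C i S T) {v : Fin N} (hv : ∀ u ∈ S, C u v = i) :
    IsMonoDropped C i (insert v S) T := by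
  refine ⟨h.1.trans (subset_insert _ _), ?_⟩
  intro x hx y hy hxy hT
  rcases mem_insert.1 hx with rfl | hxS <;> rcases mem_insert.1 hy with rfl | hyS
  · exact absurd rfl hxy
  · rw [hsym]
    exact hv y hyS
  · exact hv x hxS
  · exact h.2 x hxS y hyS hxy hT

end Coloring

section RamseyProp

def RamseyProp (r : ℕ) (k t : Fin r → ℕ) (n : ℕ) : Prop :=
  ∀ C : Fin n → Fin n → Fin r, (∀ u v, C u v = C v u) →
    ∃ i : Fin r, HasMonoDropped C i (k i) (t i)

variable {r n : ℕ} {k t : Fin r → ℕ}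

theorem RamseyProp.exists_isMonoDropped_subset (h : RamseyProp r k t n) {N : ℕ}
    {C : Fin N → Fin N → Fin r} (hsym : ∀ u v, C u v = C v u) {A : Finset (Fin N)}
    (hA : n ≤ A.card) :
    ∃ i S T, S ⊆ A ∧ IsMonoDropped C i S T ∧ S.card = k i ∧ T.card = t i := by
  obtain ⟨f, hfA⟩ := Function.Embedding.exists_of_card_le_finset (α := Fin n) (by simpa using hA)
  obtain ⟨i, hi⟩ := h (fun x y => C (f x) (f y)) fun x y => hsym (f x) (f y)
  obtain ⟨S, T, hST, hS, hT⟩ := hasMonoDropped_iff.1 hi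
  refine ⟨i, S.map f, T.map f, ?_, hST.map, by simpa using hS, by simpa using hT⟩
  intro x hx
  obtain ⟨y, -, rfl⟩ := mem_map.1 hx
  exact hfA (Set.mem_range_self y)

theorem RamseyProp.mono {m : ℕ} (h : RamseyProp r k t n) (hnm : n ≤ m) : RamseyProp r k t m := by
  intro C hsym
  obtain ⟨i, S, T, -, hST, hS, hT⟩ :=
    h.exists_isMonoDropped_subset hsym (A := univ) (by simpa using hnm)
  exact ⟨i, hasMonoDropped_iff.2 ⟨S, T, hST, hS, hT⟩⟩

theorem RamseyProp.pos (h : RamseyProp r k t n) (hk : ∀ i, k i ≠ 0) : 0 < n := by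
  rcases Nat.eq_zero_or_pos n with rfl | hn
  · obtain ⟨i, S, -, -, hS, -⟩ := h (fun u => u.elim0) fun u => u.elim0
    rw [S.eq_empty_of_isEmpty, card_empty] at hS
    exact absurd hS.symm (hk i)
  · exact hn

theorem ramseyDropped_le (h : RamseyProp r k t n) : RamseyDropped r k t ≤ n :=
  Nat.sInf_le h

theorem ramseyProp_ramseyDropped (h : ∃ n, RamseyProp r k t n) :
    RamseyProp r k t (RamseyDropped r k t) :=
  Nat.sInf_mem h

theorem ramseyProp_ramseyDropped_of_pos (h : 0 < RamseyDropped r k t) :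
    RamseyProp r k t (RamseyDropped r k t) :=
  Nat.sInf_mem (Nat.nonempty_of_pos_sInf h)

end RamseyProp

theorem ramseyProp_two_left (b : ℕ) : RamseyProp 2 ![2, b] ![2, 1] 2 :=
  fun _ _ => ⟨0, univ, univ, subset_rfl, by simp, by simp,
    fun u _ v _ _ huv => absurd ⟨mem_univ u, mem_univ v⟩ huv⟩

theorem ramseyProp_one_right (a : ℕ) : RamseyProp 2 ![a, 1] ![2, 1] 1 :=
  fun _ _ => ⟨1, univ, univ, subset_rfl, by simp, by simp,
    fun u _ v _ huv _ => absurd (Subsingleton.elim u v) huv⟩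

theorem ramseyProp_add {a b n₁ n₂ : ℕ} (ha : a ≠ 0)
    (h₁ : RamseyProp 2 ![a, b + 1] ![2, 1] n₁) (h₂ : RamseyProp 2 ![a + 1, b] ![2, 1] n₂) :
    RamseyProp 2 ![a + 1, b + 1] ![2, 1] (n₁ + n₂) := by
  intro C hsym
  have hpos : 0 < n₁ := h₁.pos (by simp [Fin.forall_fin_two, ha])
  set v : Fin (n₁ + n₂) := ⟨n₁ + n₂ - 1, by omega⟩
  set A := (univ.erase v).filter (C · v = 0)
  set B := (univ.erase v).filter (¬C · v = 0)
  have hcard : A.card + B.card = n₁ + n₂ - 1 := by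
    rw [card_filter_add_card_filter_not, card_erase_of_mem (mem_univ v)]
    simp
  rcases (by omega : n₁ ≤ A.card ∨ n₂ ≤ B.card) with hA | hB
  · obtain ⟨i, S, T, hSA, hST, hS, hT⟩ := h₁.exists_isMonoDropped_subset hsym hA
    fin_cases i
    · have hvS : v ∉ S := fun hv => by simpa [A] using hSA hv
      refine ⟨0, hasMonoDropped_iff.2 ⟨insert v S, T, ?_, ?_, by simpa using hT⟩⟩
      · exact hST.insert hsym fun u hu => (mem_filter.1 (hSA hu)).2
      · simpa [card_insert_of_notMem hvS] using hS
    · exact ⟨1, hasMonoDropped_iff.2 ⟨S, T, hST, hS, hT⟩⟩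
  · obtain ⟨i, S, T, hSB, hST, hS, hT⟩ := h₂.exists_isMonoDropped_subset hsym hB
    fin_cases i
    · exact ⟨0, hasMonoDropped_iff.2 ⟨S, T, hST, hS, hT⟩⟩
    · have hvS : v ∉ S := fun hv => by simpa [B] using hSB hv
      refine ⟨1, hasMonoDropped_iff.2 ⟨insert v S, T, ?_, ?_, by simpa using hT⟩⟩
      · exact hST.insert hsym fun u hu => Fin.eq_one_of_ne_zero _ (mem_filter.1 (hSB hu)).2
      · simpa [card_insert_of_notMem hvS] using hS

theorem exists_ramseyProp (a b : ℕ) : ∃ n, RamseyProp 2 ![a + 2, b + 1] ![2, 1] n := by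
  induction a generalizing b with
  | zero => exact ⟨2, ramseyProp_two_left _⟩
  | succ a iha =>
    induction b with
    | zero => exact ⟨1, ramseyProp_one_right _⟩
    | succ b ihb =>
      obtain ⟨n₁, h₁⟩ := iha (b + 1)
      obtain ⟨n₂, h₂⟩ := ihb
      exact ⟨n₁ + n₂, ramseyProp_add (by omega) h₁ h₂⟩

/-- Theorem 3 (b): assuming R([4,2],[8,1]) ≤ 42 and R([3,2],[k,1]) = 2k−1 for k ≥ 2,
we have R([4,2],[k,1]) ≤ k² − 22 for all k ≥ 8. -/
theorem stmt8
    (h8 : RamseyDropped 2 ![4, 8] ![2, 1] ≤ 42)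
    (h3 : ∀ k : ℕ, 2 ≤ k → RamseyDropped 2 ![3, k] ![2, 1] = 2 * k - 1) :
    ∀ k : ℕ, 8 ≤ k → RamseyDropped 2 ![4, k] ![2, 1] ≤ k ^ 2 - 22 := by
  intro k hk
  apply ramseyDropped_le
  induction k, hk using Nat.le_induction with
  | base =>
    -- `h8` alone would hold vacuously if the defining set were empty, as `sInf ∅ = 0`.
    exact (ramseyProp_ramseyDropped (exists_ramseyProp 2 7)).mono h8
  | succ k hk ih =>
    have h3k : RamseyProp 2 ![3, k + 1] ![2, 1] (2 * (k + 1) - 1) := by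
      rw [← h3 (k + 1) (by omega)]
      exact ramseyProp_ramseyDropped_of_pos (by rw [h3 (k + 1) (by omega)]; omega)
    refine (ramseyProp_add three_ne_zero h3k ih).mono (le_of_eq ?_)
    have : 64 ≤ k ^ 2 := by nlinarith
    rw [add_sq]
    omega
end

section
/- (Burr–Roberts, special case) For r ≥ 2, the r-color Ramsey number of the star K_{1,2} (smallest n such that every r-edge-coloring of K_n contains a vertex with two incident edges of the same color) equals r + 1 if r is even and r + 2 if r is odd. -/
open Finset

/-- A finset closed under a fixed-point-free involution has even cardinality. -/
lemma even_card_invol {α : Type*} [DecidableEq α] (f : α → α)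
    (hf : ∀ x, f (f x) = x) (hne : ∀ x, f x ≠ x) :
    ∀ s : Finset α, (∀ x ∈ s, f x ∈ s) → Even s.card := by
  intro s
  induction s using Finset.strongInduction with
  | _ s ih =>
    intro hcl
    rcases s.eq_empty_or_nonempty with rfl | ⟨a, ha⟩
    · simp
    · have hfa : f a ∈ s := hcl a ha
      have hfa' : f a ∈ s.erase a := Finset.mem_erase.2 ⟨hne a, hfa⟩
      set s' := (s.erase a).erase (f a) with hs'
      have hsub : s' ⊂ s := by
        refine (Finset.ssubset_iff_of_subset
          (((s.erase a).erase_subset _).trans (s.erase_subset _))).2 ⟨a, ha, ?_⟩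
        simp [hs']
      have hcl' : ∀ x ∈ s', f x ∈ s' := by
        intro x hx
        simp only [hs', Finset.mem_erase] at hx ⊢
        refine ⟨?_, ?_, hcl x hx.2.2⟩
        · intro hxx
          apply hx.2.1
          have := congrArg f hxx
          rwa [hf, hf] at this
        · intro hxx
          apply hx.1
          have := congrArg f hxx
          rwa [hf] at this
      have hev := ih s' hsub hcl'
      have c1 : (s.erase a).card = s.card - 1 := Finset.card_erase_of_mem ha
      have c2 : s'.card = (s.erase a).card - 1 := Finset.card_erase_of_mem hfa'
      have p1 : 0 < s.card := Finset.card_pos.2 ⟨a, ha⟩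
      have p2 : 0 < (s.erase a).card := Finset.card_pos.2 ⟨f a, hfa'⟩
      obtain ⟨k, hk⟩ := hev
      exact ⟨k + 1, by omega⟩

/-- Pigeonhole: any coloring of `K_n` with `n ≥ r+2` has a monochromatic `K_{1,2}`. -/
lemma mono_of_big {r n : ℕ} (hrn : r + 2 ≤ n) :
    ∀ C : Fin n → Fin n → Fin r, (∀ u v, C u v = C v u) →
      ∃ v a b : Fin n, a ≠ b ∧ v ≠ a ∧ v ≠ b ∧ C v a = C v b := by
  intro C _
  have hn : 0 < n := by omega
  set v : Fin n := ⟨0, hn⟩ with hv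
  have hcard : (univ : Finset (Fin r)).card < ((univ : Finset (Fin n)).erase v).card := by
    rw [Finset.card_erase_of_mem (mem_univ _), Finset.card_univ, Finset.card_univ,
      Fintype.card_fin, Fintype.card_fin]
    omega
  obtain ⟨a, ha, b, hb, hab, he⟩ :=
    Finset.exists_ne_map_eq_of_card_lt_of_maps_to hcard
      (fun x _ => Finset.mem_univ (C v x))
  exact ⟨v, a, b, hab, Ne.symm (Finset.mem_erase.1 ha).1,
    Ne.symm (Finset.mem_erase.1 hb).1, he⟩

/-- For even `r`, every coloring of `K_{r+1}` has a monochromatic `K_{1,2}`. -/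
lemma mono_of_even {r : ℕ} (hr : 2 ≤ r) (hre : Even r) :
    ∀ C : Fin (r + 1) → Fin (r + 1) → Fin r, (∀ u v, C u v = C v u) →
      ∃ v a b : Fin (r + 1), a ≠ b ∧ v ≠ a ∧ v ≠ b ∧ C v a = C v b := by
  intro C hsym
  by_contra hcon
  push_neg at hcon
  haveI : NeZero r := ⟨by omega⟩
  have hex : ∀ v : Fin (r + 1), ∃ w, w ≠ v ∧ C v w = 0 := by
    intro v
    have hinj : Set.InjOn (C v) ((univ : Finset (Fin (r + 1))).erase v) := by
      intro a ha b hb hab'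
      have ha' : a ≠ v := by simpa using ha
      have hb' : b ≠ v := by simpa using hb
      by_contra hne
      exact hcon v a b hne (Ne.symm ha') (Ne.symm hb') hab'
    have himg : (((univ : Finset (Fin (r + 1))).erase v).image (C v)).card = r := by
      rw [Finset.card_image_of_injOn hinj, Finset.card_erase_of_mem (mem_univ _),
        Finset.card_univ, Fintype.card_fin]
      omega
    have heq : ((univ : Finset (Fin (r + 1))).erase v).image (C v) = univ :=
      Finset.eq_univ_of_card _ (by simp [himg])
    have h0 : (0 : Fin r) ∈ ((univ : Finset (Fin (r + 1))).erase v).image (C v) := by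
      rw [heq]; exact mem_univ _
    obtain ⟨w, hw, hcw⟩ := Finset.mem_image.1 h0
    exact ⟨w, (Finset.mem_erase.1 hw).1, hcw⟩
  choose f hf1 hf2 using hex
  have huniq : ∀ v w w' : Fin (r + 1), w ≠ v → w' ≠ v → C v w = 0 → C v w' = 0 → w = w' := by
    intro v w w' hw hw' h0 h0'
    by_contra hne
    exact hcon v w w' hne (Ne.symm hw) (Ne.symm hw') (h0.trans h0'.symm)
  have hfi : ∀ v, f (f v) = v := by
    intro v
    refine huniq (f v) (f (f v)) v (hf1 (f v)) (Ne.symm (hf1 v)) (hf2 (f v)) ?_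
    rw [hsym (f v) v]; exact hf2 v
  have heven := even_card_invol f hfi hf1 Finset.univ (fun x _ => Finset.mem_univ _)
  rw [Finset.card_univ, Fintype.card_fin] at heven
  obtain ⟨k, hk⟩ := hre
  obtain ⟨m, hm⟩ := heven
  omega

/-- If there is a good coloring of `K_M`, then for any `m ≤ M` the Ramsey
property fails at `m`. -/
lemma not_mem_of_good {r M : ℕ} (B : Fin M → Fin M → Fin r)
    (hsymB : ∀ u v, B u v = B v u)
    (hgood : ∀ v a b : Fin M, a ≠ b → v ≠ a → v ≠ b → B v a ≠ B v b)
    {m : ℕ} (hm : m ≤ M) :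
    ¬ (∀ C : Fin m → Fin m → Fin r, (∀ u v, C u v = C v u) →
      ∃ v a b : Fin m, a ≠ b ∧ v ≠ a ∧ v ≠ b ∧ C v a = C v b) := by
  intro H
  obtain ⟨v, a, b, hab, hva, hvb, he⟩ :=
    H (fun u v => B (Fin.castLE hm u) (Fin.castLE hm v)) (fun u v => hsymB _ _)
  exact hgood _ _ _ ((Fin.castLE_injective hm).ne hab)
    ((Fin.castLE_injective hm).ne hva) ((Fin.castLE_injective hm).ne hvb) he

/-- Good coloring of `K_r` (any `r ≥ 1`). -/
lemma good_even {r : ℕ} (hr : 0 < r) :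
    ∃ B : Fin r → Fin r → Fin r, (∀ u v, B u v = B v u) ∧
      ∀ v a b : Fin r, a ≠ b → v ≠ a → v ≠ b → B v a ≠ B v b := by
  refine ⟨fun u v => ⟨(u.val + v.val) % r, Nat.mod_lt _ hr⟩, ?_, ?_⟩
  · intro u v; ext; simp [Nat.add_comm]
  · intro v a b hab _ _ heq
    apply hab
    have hE : (v.val + a.val) % r = (v.val + b.val) % r := congrArg Fin.val heq
    have := Nat.ModEq.add_left_cancel' v.val hE
    have ha := a.isLt
    have hb := b.isLt
    ext
    rwa [Nat.ModEq, Nat.mod_eq_of_lt ha, Nat.mod_eq_of_lt hb] at this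

/-- Good coloring of `K_{r+1}` for odd `r`. -/
lemma good_odd {r : ℕ} (hr : 0 < r) (hodd : Odd r) :
    ∃ B : Fin (r + 1) → Fin (r + 1) → Fin r, (∀ u v, B u v = B v u) ∧
      ∀ v a b : Fin (r + 1), a ≠ b → v ≠ a → v ≠ b → B v a ≠ B v b := by
  have hco : Nat.gcd r 2 = 1 := Nat.coprime_two_right.2 hodd
  refine ⟨fun u v => ⟨(if u = Fin.last r then 2 * v.val else
      if v = Fin.last r then 2 * u.val else u.val + v.val) % r, Nat.mod_lt _ hr⟩, ?_, ?_⟩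
  · intro u v
    ext
    by_cases hu : u = Fin.last r <;> by_cases hv : v = Fin.last r
    · subst hu; subst hv; rfl
    · simp [hu, hv]
    · simp [hu, hv]
    · simp [hu, hv, Nat.add_comm]
  · intro v a b hab hva hvb heq
    have hE := congrArg Fin.val heq
    simp only at hE
    by_cases hv : v = Fin.last r
    · have ha : a ≠ Fin.last r := fun h => hva (hv.trans h.symm)
      have hb : b ≠ Fin.last r := fun h => hvb (hv.trans h.symm)
      rw [if_pos hv, if_pos hv] at hE
      have h2 : a.val ≡ b.val [MOD r] := Nat.ModEq.cancel_left_of_coprime hco hE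
      apply hab
      ext
      rwa [Nat.ModEq, Nat.mod_eq_of_lt (Fin.val_lt_last ha),
        Nat.mod_eq_of_lt (Fin.val_lt_last hb)] at h2
    · by_cases ha : a = Fin.last r <;> by_cases hb : b = Fin.last r
      · exact hab (ha.trans hb.symm)
      · rw [if_neg hv, if_neg hv, if_pos ha, if_neg hb, two_mul] at hE
        have h2 : v.val ≡ b.val [MOD r] := Nat.ModEq.add_left_cancel' v.val hE
        apply hvb
        ext
        rwa [Nat.ModEq, Nat.mod_eq_of_lt (Fin.val_lt_last hv),
          Nat.mod_eq_of_lt (Fin.val_lt_last hb)] at h2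
      · rw [if_neg hv, if_neg hv, if_neg ha, if_pos hb, two_mul] at hE
        have h2 : a.val ≡ v.val [MOD r] := Nat.ModEq.add_left_cancel' v.val hE
        apply hva
        ext
        rw [Nat.ModEq, Nat.mod_eq_of_lt (Fin.val_lt_last hv),
          Nat.mod_eq_of_lt (Fin.val_lt_last ha)] at h2
        exact h2.symm
      · rw [if_neg hv, if_neg hv, if_neg ha, if_neg hb] at hE
        have h2 : a.val ≡ b.val [MOD r] := Nat.ModEq.add_left_cancel' v.val hE
        apply hab
        ext
        rwa [Nat.ModEq, Nat.mod_eq_of_lt (Fin.val_lt_last ha),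
          Nat.mod_eq_of_lt (Fin.val_lt_last hb)] at h2

/-- Burr–Roberts (special case): the r-color Ramsey number of the star K_{1,2}
equals r + 1 for r even and r + 2 for r odd. -/
theorem stmt13 (r : ℕ) (hr : 2 ≤ r) :
    (Even r →
      sInf {n | ∀ C : Fin n → Fin n → Fin r, (∀ u v, C u v = C v u) →
        ∃ v a b : Fin n, a ≠ b ∧ v ≠ a ∧ v ≠ b ∧ C v a = C v b} = r + 1) ∧
    (Odd r →
      sInf {n | ∀ C : Fin n → Fin n → Fin r, (∀ u v, C u v = C v u) →
        ∃ v a b : Fin n, a ≠ b ∧ v ≠ a ∧ v ≠ b ∧ C v a = C v b} = r + 2) := by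
  constructor
  · intro hre
    have hmem : (r + 1) ∈ {n | ∀ C : Fin n → Fin n → Fin r, (∀ u v, C u v = C v u) →
        ∃ v a b : Fin n, a ≠ b ∧ v ≠ a ∧ v ≠ b ∧ C v a = C v b} := mono_of_even hr hre
    refine le_antisymm (Nat.sInf_le hmem) (le_csInf ⟨_, hmem⟩ ?_)
    intro m hm
    by_contra hlt
    push_neg at hlt
    obtain ⟨B, hsymB, hgood⟩ := good_even (show 0 < r by omega)
    exact not_mem_of_good B hsymB hgood (show m ≤ r by omega) hm
  · intro hodd
    have hmem : (r + 2) ∈ {n | ∀ C : Fin n → Fin n → Fin r, (∀ u v, C u v = C v u) →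
        ∃ v a b : Fin n, a ≠ b ∧ v ≠ a ∧ v ≠ b ∧ C v a = C v b} := mono_of_big le_rfl
    refine le_antisymm (Nat.sInf_le hmem) (le_csInf ⟨_, hmem⟩ ?_)
    intro m hm
    by_contra hlt
    push_neg at hlt
    obtain ⟨B, hsymB, hgood⟩ := good_odd (show 0 < r by omega) hodd
    exact not_mem_of_good B hsymB hgood (show m ≤ r + 1 by omega) hm
end

section
/- For all integers r, k ≥ 2, χ_r(k) ≤ r·χ_r(k−1) − r + 2. -/
open Finset

lemma chiProp_pred {r k n : ℕ} (h : ChiProp r k n) : ChiProp r (k - 1) n := by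
  intro N hN C hC
  obtain ⟨e, he, φ, hφ⟩ := h N hN C hC
  refine ⟨e ∘ Fin.castLE (Nat.sub_le k 1), he.comp (Fin.castLE_injective _),
    φ ∘ Fin.castLE (Nat.sub_le k 1), ?_⟩
  intro i j hij
  exact hφ _ _ hij

lemma chiProp_step {r k m : ℕ} (hr : 1 ≤ r) (hk : 2 ≤ k)
    (h : ChiProp r (k - 1) m) : ChiProp r k (r * m - r + 2) := by
  have hm : 1 ≤ m := by
    by_contra hm
    push_neg at hm
    interval_cases m
    obtain ⟨e, he, φ, hφ⟩ := h 0 (le_refl 0) (fun x _ => x.elim0) (fun u v => u.elim0)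
    exact (e ⟨0, by omega⟩).elim0
  obtain ⟨m', rfl⟩ : ∃ m', m = m' + 1 := ⟨m - 1, by omega⟩
  intro N hN C hC
  have hN2 : r * m' + 2 ≤ N := by
    have : r * (m' + 1) = r * m' + r := by ring
    omega
  set v : Fin N := ⟨0, by omega⟩ with hv
  have hmaps : ∀ u ∈ univ.erase v, C v u ∈ (univ : Finset (Fin r)) := fun _ _ => mem_univ _
  have hcard : (univ : Finset (Fin r)).card * m' < (univ.erase v).card := by
    rw [card_erase_of_mem (mem_univ v), card_univ, Fintype.card_fin, card_univ,
      Fintype.card_fin]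
    omega
  obtain ⟨i, -, hi⟩ := exists_lt_card_fiber_of_mul_lt_card_of_maps_to hmaps hcard
  set F := (univ.erase v).filter (fun u => C v u = i) with hF
  have hFm : m' + 1 ≤ F.card := hi
  let σ := F.orderIsoOfFin rfl
  let emb : Fin F.card → Fin N := fun a => (σ a : Fin N)
  have hembF : ∀ a, emb a ∈ F := fun a => (σ a).2
  have hembInj : Function.Injective emb := fun a b hab => σ.injective (Subtype.ext hab)
  have hembv : ∀ a, emb a ≠ v := by
    intro a
    have := hembF a
    rw [hF, mem_filter, mem_erase] at this
    exact this.1.1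
  have hembc : ∀ a, C v (emb a) = i := by
    intro a
    have := hembF a
    rw [hF, mem_filter] at this
    exact this.2
  obtain ⟨e, he, φ, hφ⟩ := h F.card hFm (fun a b => C (emb a) (emb b)) (fun a b => hC _ _)
  obtain ⟨k', rfl⟩ : ∃ k', k = k' + 1 := ⟨k - 1, by omega⟩
  refine ⟨Fin.cases v (fun j => emb (e j)), ?_, Fin.cases i φ, ?_⟩
  · intro a b hab
    induction a using Fin.cases with
    | zero =>
      induction b using Fin.cases with
      | zero => rfl
      | succ b => exact absurd hab.symm (hembv (e b))
    | succ a =>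
      induction b using Fin.cases with
      | zero => exact absurd hab (hembv (e a))
      | succ b =>
        have : e a = e b := hembInj hab
        rw [he this]
  · intro a b hab
    induction a using Fin.cases with
    | zero =>
      induction b using Fin.cases with
      | zero => exact absurd hab (lt_irrefl _)
      | succ b => exact hembc (e b)
    | succ a =>
      induction b using Fin.cases with
      | zero => exact (Fin.not_lt_zero _ hab).elim
      | succ b => exact hφ a b (Fin.succ_lt_succ_iff.mp hab)

/-- Proposition 1: χ_r(k) ≤ r·χ_r(k−1) − r + 2 for all r, k ≥ 2. -/
theorem stmt15 (r k : ℕ) (hr : 2 ≤ r) (hk : 2 ≤ k) :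
    chiNum r k ≤ r * chiNum r (k - 1) - r + 2 := by
  by_cases hne : {n | ChiProp r (k - 1) n}.Nonempty
  · have hm : ChiProp r (k - 1) (chiNum r (k - 1)) := Nat.sInf_mem hne
    have hstep := chiProp_step (by omega) hk hm
    exact Nat.sInf_le hstep
  · have hempty : {n | ChiProp r k n} = ∅ := by
      rw [Set.eq_empty_iff_forall_notMem]
      intro n hn
      exact hne ⟨n, chiProp_pred hn⟩
    rw [chiNum, hempty, Nat.sInf_empty]
    omega
end

section
/- For all integers r, k ≥ 2: if r is odd then χ_r(k) ≤ (r^{k−1} − 1)/(r − 1) + 1, and if r is even then χ_r(k) ≤ (r^{k−3} − 1)/(r − 1) + r^{k−2} + 1. -/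
open Finset

/-! If `N - 1 > r n`, the edges at a fixed vertex `v` of `K_N` have a colour class with more
than `n` other endpoints; a `χ_r`-clique of order `k` inside it extends by `v` to one of
order `k + 1`. Hence `χ_r(k + 1) ≤ r (χ_r(k) - 1) + 2`, and iterating from `χ_r(1) = 1`, or for
even `r` from `χ_r(3) ≤ r + 1`, gives the geometric sums `(r^j - 1)/(r - 1)`. -/

variable {N r : ℕ}

lemma hasChiClique_cons {k : ℕ} {C : Fin N → Fin N → Fin r} {v : Fin N} {i : Fin r}
    {e : Fin k → Fin N} (he : Function.Injective e) (hv : v ∉ Set.range e)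
    (hvi : ∀ j, C v (e j) = i) {φ : Fin k → Fin r}
    (hφ : ∀ a b, a < b → C (e a) (e b) = φ a) : HasChiClique (k + 1) C := by
  refine ⟨Fin.cons v e, Fin.cons_injective_iff.2 ⟨hv, he⟩, Fin.cons i φ, fun a b hab => ?_⟩
  obtain ⟨b, rfl⟩ := Fin.exists_succ_eq.2 (Fin.ne_zero_of_lt hab)
  cases a using Fin.cases with
  | zero => simpa using hvi b
  | succ a => simpa using hφ a b (Fin.succ_lt_succ_iff.1 hab)

lemma hasChiClique_three_of_color_eq {C : Fin N → Fin N → Fin r} {v u w : Fin N} (huv : u ≠ v)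
    (hwv : w ≠ v) (huw : u ≠ w) (h : C v u = C v w) : HasChiClique 3 C := by
  refine hasChiClique_cons (v := v) (e := ![u, w]) (φ := fun _ => C u w) ?_ ?_ (i := C v u) ?_ ?_
  · intro a b
    fin_cases a <;> fin_cases b <;> simp [huw, huw.symm]
  · simp [huv.symm, hwv.symm]
  · simp [Fin.forall_fin_two, h]
  · simp [Fin.forall_fin_two]

namespace ChiProp

variable {k n : ℕ}

lemma exists_chiClique_of_le_card (H : ChiProp r k n) {C : Fin N → Fin N → Fin r}
    (hsym : ∀ u v, C u v = C v u) {S : Finset (Fin N)} (hS : n ≤ #S) :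
    ∃ e : Fin k → Fin N, Function.Injective e ∧ (∀ j, e j ∈ S) ∧
      ∃ φ : Fin k → Fin r, ∀ a b, a < b → C (e a) (e b) = φ a := by
  let ι : Fin #S → Fin N := fun a => S.equivFin.symm a
  obtain ⟨e, he, φ, hφ⟩ := H #S hS (fun a b => C (ι a) (ι b)) (fun a b => hsym _ _)
  exact ⟨ι ∘ e, (Subtype.val_injective.comp S.equivFin.symm.injective).comp he,
    fun j => (S.equivFin.symm (e j)).2, φ, hφ⟩

lemma succ (H : ChiProp r k (n + 1)) : ChiProp r (k + 1) (r * n + 2) := by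
  intro N hN C hsym
  let v : Fin N := ⟨0, by omega⟩
  have hcard : #(univ : Finset (Fin r)) * n < #(univ.erase v) := by
    simp only [card_univ, Fintype.card_fin, card_erase_of_mem (mem_univ v)]
    omega
  obtain ⟨i, -, hi⟩ := exists_lt_card_fiber_of_mul_lt_card_of_maps_to
    (fun u _ => mem_univ (C v u)) hcard
  obtain ⟨e, he, heS, φ, hφ⟩ := H.exists_chiClique_of_le_card hsym hi
  simp only [mem_filter, mem_erase] at heS
  exact hasChiClique_cons he (fun ⟨j, hj⟩ => (heS j).1.1 hj) (fun j => (heS j).2) hφ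

lemma add (H : ChiProp r k (n + 1)) (j : ℕ) :
    ChiProp r (k + j) (r ^ j * n + ∑ i ∈ range j, r ^ i + 1) := by
  induction j with
  | zero => simpa using H
  | succ j ih =>
    rw [← add_assoc]
    convert ih.succ using 1
    rw [geom_sum_succ, pow_succ]
    ring

end ChiProp

lemma chiNum_le {k n : ℕ} (H : ChiProp r k n) : chiNum r k ≤ n := Nat.sInf_le H

lemma chiProp_one (r : ℕ) : ChiProp r 1 1 := fun N hN C _ =>
  let v : Fin N := ⟨0, hN⟩
  ⟨fun _ => v, Function.injective_of_subsingleton _, fun _ => C v v,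
    fun a b hab => absurd hab (Subsingleton.elim a b ▸ lt_irrefl a)⟩

lemma chiProp_geomSum (r j : ℕ) : ChiProp r (j + 1) (∑ i ∈ range j, r ^ i + 1) := by
  simpa [add_comm] using (chiProp_one r).add (n := 0) j

/-- Otherwise every vertex sees each colour at most once, hence `N = r + 1` and every colour
class is a perfect matching of `K_{r+1}`, which has odd order. -/
lemma chiProp_three_of_even (hr : Even r) (hr0 : 0 < r) : ChiProp r 3 (r + 1) := by
  intro N hN C hsym
  by_contra hno
  have hinj : ∀ v, Set.InjOn (C v) ↑(univ.erase v) := fun v u hu w hw h => by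
    by_contra huw
    simp only [coe_erase, coe_univ, Set.mem_sdiff, Set.mem_singleton_iff] at hu hw
    exact hno (hasChiClique_three_of_color_eq hu.2 hw.2 huw h)
  let v₀ : Fin N := ⟨0, by omega⟩
  have hNr : N = r + 1 := by
    have := card_le_card_of_injOn (C v₀) (fun _ _ => mem_coe.2 (mem_univ _)) (hinj v₀)
    simp only [card_erase_of_mem (mem_univ v₀), card_univ, Fintype.card_fin] at this
    omega
  let c : Fin r := ⟨0, hr0⟩
  let G : SimpleGraph (Fin N) :=
    { Adj u v := u ≠ v ∧ C u v = c
      symm := ⟨fun u v h => ⟨h.1.symm, hsym v u ▸ h.2⟩⟩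
      loopless := ⟨fun u h => h.1 rfl⟩ }
  have hmatch : ∀ v, ∃! u, G.Adj v u := by
    intro v
    obtain ⟨u, hu, hcu⟩ := surj_on_of_inj_on_of_card_le (fun u _ => C v u)
      (fun _ _ => mem_univ _) (fun _ _ ha hb h => hinj v ha hb h)
      (by simp [card_erase_of_mem (mem_univ v), hNr]) c (mem_univ c)
    refine ⟨u, ⟨(ne_of_mem_erase hu).symm, hcu.symm⟩, fun w hw => hinj v ?_ hu ?_⟩
    · simpa using hw.1.symm
    · exact hw.2.trans hcu
  have heven : Even N := by
    simpa using ((⊤ : G.Subgraph).isPerfectMatching_iff.2 (by simpa using hmatch)).even_card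
  exact Nat.not_even_iff_odd.2 hr.add_one (hNr ▸ heven)

lemma chiProp_of_even (hr : Even r) (hr0 : 0 < r) (j : ℕ) :
    ChiProp r (j + 3) (∑ i ∈ range j, r ^ i + r ^ (j + 1) + 1) := by
  convert (chiProp_three_of_even hr hr0).add j using 1
  · ring
  · ring

/-- Proposition 2: for r, k ≥ 2, χ_r(k) ≤ (r^{k−1} − 1)/(r − 1) + 1 if r is odd,
and χ_r(k) ≤ (r^{k−3} − 1)/(r − 1) + r^{k−2} + 1 if r is even. -/
theorem stmt16 (r k : ℕ) (hr : 2 ≤ r) (hk : 2 ≤ k) :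
    (Odd r → chiNum r k ≤ (r ^ (k - 1) - 1) / (r - 1) + 1) ∧
    (Even r → chiNum r k ≤ (r ^ (k - 3) - 1) / (r - 1) + r ^ (k - 2) + 1) := by
  obtain ⟨j, rfl⟩ : ∃ j, k = j + 2 := ⟨k - 2, by omega⟩
  refine ⟨fun _ => ?_, fun hre => ?_⟩
  · simpa [Nat.geomSum_eq hr] using chiNum_le (chiProp_geomSum r (j + 1))
  · rcases j with _ | j
    · simpa using chiNum_le (chiProp_geomSum r 1)
    · simpa [Nat.geomSum_eq hr] using chiNum_le (chiProp_of_even hre (by omega) j)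
end

section
/- For all integers r, k ≥ 2, R_r([k,1]) ≤ χ_r(r(k−2) + 2) and R_r([k,2]) ≤ χ_r(r(k−3) + 3). -/
open Finset

lemma chiProp_exists (r : ℕ) (hr : 1 ≤ r) : ∀ m, ∃ n, ChiProp r m n := by
  intro m
  induction m with
  | zero =>
    exact ⟨0, fun N _ C _ => ⟨Fin.elim0, fun i => i.elim0, Fin.elim0, fun i => i.elim0⟩⟩
  | succ m ih =>
    obtain ⟨n, hn⟩ := ih
    refine ⟨r * n + 1, ?_⟩
    intro N hN C hsym
    have hN1 : 0 < N := by omega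
    set v : Fin N := ⟨0, hN1⟩ with hv
    have hcard : (Finset.univ.erase v).card = N - 1 := by
      simp [Finset.card_erase_of_mem]
    have hmul : (Finset.univ : Finset (Fin r)).card * n ≤ (Finset.univ.erase v).card := by
      rw [hcard, Finset.card_univ, Fintype.card_fin]
      omega
    obtain ⟨c, -, hc⟩ := Finset.exists_le_card_fiber_of_mul_le_card_of_maps_to
      (f := fun u => C v u) (fun a _ => Finset.mem_univ _) ⟨⟨0, by omega⟩, Finset.mem_univ _⟩ hmul
    set s := (Finset.univ.erase v).filter (fun u => C v u = c) with hs
    set M := s.card with hM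
    let g := s.orderIsoOfFin (rfl : s.card = M)
    obtain ⟨e, he, φ, hφ⟩ := hn M hc (fun a b => C (g a) (g b)) (fun a b => hsym _ _)
    have hmem : ∀ x : Fin M, ((g x : Fin N) ∈ s) := fun x => (g x).2
    have hgne : ∀ x : Fin M, (g x : Fin N) ≠ v := fun x =>
      (Finset.mem_erase.mp (Finset.mem_filter.mp (hmem x)).1).1
    have hgc : ∀ x : Fin M, C v (g x) = c := fun x =>
      (Finset.mem_filter.mp (hmem x)).2
    refine ⟨Fin.cases v (fun i => (g (e i) : Fin N)), ?_, Fin.cases c φ, ?_⟩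
    · intro i j hij
      induction i using Fin.cases with
      | zero =>
        induction j using Fin.cases with
        | zero => rfl
        | succ j' => simp only [Fin.cases_zero, Fin.cases_succ] at hij
                     exact absurd hij.symm (hgne _)
      | succ i' =>
        induction j using Fin.cases with
        | zero => simp only [Fin.cases_zero, Fin.cases_succ] at hij
                  exact absurd hij (hgne _)
        | succ j' =>
          simp only [Fin.cases_succ] at hij
          rw [he (g.injective (Subtype.coe_injective hij))]
    · intro i j hij
      induction i using Fin.cases with
      | zero =>
        induction j using Fin.cases with
        | zero => exact absurd hij (lt_irrefl _)
        | succ j' => simp only [Fin.cases_zero, Fin.cases_succ]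
                     exact hgc _
      | succ i' =>
        induction j using Fin.cases with
        | zero => exact absurd hij (Fin.not_lt.mpr (Fin.zero_le _))
        | succ j' =>
          simp only [Fin.cases_succ]
          exact hφ i' j' (Fin.succ_lt_succ_iff.mp hij)

lemma chiProp_chiNum (r m : ℕ) (hr : 1 ≤ r) : ChiProp r m (chiNum r m) :=
  Nat.sInf_mem (chiProp_exists r hr m)

lemma mono_from_chi {N r k t : ℕ} (hr : 1 ≤ r) (ht : t ≤ k)
    (C : Fin N → Fin N → Fin r) (hsym : ∀ u v, C u v = C v u)
    (h : HasChiClique (r * (k - t - 1) + t + 1) C) :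
    ∃ i : Fin r, HasMonoDropped C i k t := by
  set p := k - t - 1 with hp
  set m := r * p + t + 1 with hm
  obtain ⟨e, he, φ, hφ⟩ := h
  have hle : r * p + 1 ≤ m := by omega
  set A : Finset (Fin m) := Finset.map (Fin.castLEEmb hle) Finset.univ with hA
  have hAmem : ∀ i : Fin m, i ∈ A ↔ (i : ℕ) < r * p + 1 := by
    intro i
    constructor
    · rintro hi
      rw [hA, Finset.mem_map] at hi
      obtain ⟨j, -, rfl⟩ := hi
      simpa using j.2
    · intro hi
      rw [hA, Finset.mem_map]
      exact ⟨⟨i, hi⟩, Finset.mem_univ _, by ext; simp⟩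
  have hAcard : A.card = r * p + 1 := by
    rw [hA, Finset.card_map, Finset.card_univ, Fintype.card_fin]
  obtain ⟨c, -, hc⟩ := Finset.exists_lt_card_fiber_of_mul_lt_card_of_maps_to
    (f := φ) (t := (Finset.univ : Finset (Fin r))) (fun a _ => Finset.mem_univ _)
    (by rw [hAcard, Finset.card_univ, Fintype.card_fin]; omega) (n := p)
  obtain ⟨F, hFsub, hFcard⟩ := Finset.exists_subset_card_eq (s := A.filter (fun i => φ i = c))
    (n := k - t) (by omega)
  set Ttop : Finset (Fin m) := Finset.univ \ A with hT
  have hTcard : Ttop.card = t := by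
    rw [hT, Finset.card_sdiff_of_subset (Finset.subset_univ _), Finset.card_univ, Fintype.card_fin, hAcard]
    omega
  have hFA : F ⊆ A := hFsub.trans (Finset.filter_subset _ _)
  have hFc : ∀ i ∈ F, φ i = c := fun i hi => (Finset.mem_filter.mp (hFsub hi)).2
  have hdisj : Disjoint F Ttop := by
    rw [hT]
    exact Finset.disjoint_sdiff.mono_left hFA
  refine ⟨c, (F ∪ Ttop).image e, Ttop.image e, ?_, ?_, ?_, ?_⟩
  · exact Finset.image_subset_image Finset.subset_union_right
  · rw [Finset.card_image_of_injective _ he, Finset.card_union_of_disjoint hdisj,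
      hFcard, hTcard]
    omega
  · rw [Finset.card_image_of_injective _ he, hTcard]
  · intro u hu v hv huv hnT
    obtain ⟨i, hi, rfl⟩ := Finset.mem_image.mp hu
    obtain ⟨j, hj, rfl⟩ := Finset.mem_image.mp hv
    have hij : i ≠ j := fun h => huv (by rw [h])
    have hmemT : ∀ x, e x ∈ Ttop.image e ↔ x ∈ Ttop := by
      intro x
      constructor
      · intro hx
        obtain ⟨y, hy, hxy⟩ := Finset.mem_image.mp hx
        rwa [← he hxy]
      · exact Finset.mem_image_of_mem e
    rw [hmemT, hmemT] at hnT
    have key : ∀ a b : Fin m, a ∈ F ∪ Ttop → b ∈ F ∪ Ttop → a < b →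
        ¬(a ∈ Ttop ∧ b ∈ Ttop) → C (e a) (e b) = c := by
      intro a b ha hb hab hn
      have haF : a ∈ F := by
        rcases Finset.mem_union.mp ha with h1 | h1
        · exact h1
        · exfalso
          rcases Finset.mem_union.mp hb with h2 | h2
          · have hbA : b ∈ A := hFA h2
            rw [hAmem] at hbA
            have haA : a ∉ A := (Finset.mem_sdiff.mp h1).2
            rw [hAmem] at haA
            have := hab
            rw [Fin.lt_def] at this
            omega
          · exact hn ⟨h1, h2⟩
      rw [hφ a b hab, hFc a haF]
    rcases lt_or_gt_of_ne hij with hlt | hlt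
    · exact key i j hi hj hlt hnT
    · rw [hsym]
      exact key j i hj hi hlt (fun hh => hnT ⟨hh.2, hh.1⟩)

/-- Corollary 2: for r, k ≥ 2, R_r([k,1]) ≤ χ_r(r(k−2)+2) and
R_r([k,2]) ≤ χ_r(r(k−3)+3). -/
theorem stmt18 (r k : ℕ) (hr : 2 ≤ r) (hk : 2 ≤ k) :
    RamseyDropped r (fun _ => k) (fun _ => 1) ≤ chiNum r (r * (k - 2) + 2) ∧
    RamseyDropped r (fun _ => k) (fun _ => 2) ≤ chiNum r (r * (k - 3) + 3) := by
  constructor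
  · apply Nat.sInf_le
    intro C hsym
    have h := chiProp_chiNum r (r * (k - 2) + 2) (by omega) _ le_rfl C hsym
    have heq : r * (k - 1 - 1) + 1 + 1 = r * (k - 2) + 2 := by
      rw [show k - 1 - 1 = k - 2 from by omega]
    exact mono_from_chi (by omega) (by omega) C hsym (by rw [heq]; exact h)
  · apply Nat.sInf_le
    intro C hsym
    have h := chiProp_chiNum r (r * (k - 3) + 3) (by omega) _ le_rfl C hsym
    have heq : r * (k - 2 - 1) + 2 + 1 = r * (k - 3) + 3 := by
      rw [show k - 2 - 1 = k - 3 from by omega]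
    exact mono_from_chi (by omega) (by omega) C hsym (by rw [heq]; exact h)
end
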